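/- Let M_t be the Mehler kernel on ℝ^n. There exists a constant C > 0 (depending only on n) such that for all x, y ∈ ℝ^n and all t ∈ (0,1], |t ∂_t M_t(x,y)| ≤ C · t^{-n/2} · exp(-|x-y|^2/(8t)) · exp((|x|^2+|y|^2)/2). -/

import Mathlib

/-!
Write `∂ₜ M_t = M_t · L_t`, where `L_t` is the logarithmic derivative. For `t ∈ (0, 1]` the
elementary bounds `2t/3 ≤ 1 - e^{-2t} ≤ 2t` and `e^{-t} ≥ 1/3` give
`t |L_t| ≤ 3n/2 + (9/2)|x - y|²/t + t(|x|² + |y|²)` and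
`M_t ≤ (2t/3)^{-n/2} e^{-|x - y|²/(6t)} e^{(1/2 - t/8)(|x|² + |y|²)}`.
The Gaussian factors `e^{-|x - y|²/(24t)}` and `e^{-t(|x|² + |y|²)/8}` left over after splitting
off the claimed ones absorb the two unbounded terms of `t |L_t|`, since `z e^{-z/c} ≤ c`.
-/

noncomputable def mehler (n : ℕ) (t : ℝ) (x y : EuclideanSpace ℝ (Fin n)) : ℝ :=
  (1 - Real.exp (-2 * t)) ^ (-(n : ℝ) / 2) *
    Real.exp (-(Real.exp (-t) * ‖x - y‖ ^ 2) / (1 - Real.exp (-2 * t))) *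
    Real.exp (Real.exp (-t) * (‖x‖ ^ 2 + ‖y‖ ^ 2) / (1 + Real.exp (-t)))

open Real

lemma exp_neg_mul_one_add_le_one (s : ℝ) : exp (-s) * (1 + s) ≤ 1 :=
  calc exp (-s) * (1 + s) ≤ exp (-s) * exp s := by gcongr; linarith [add_one_le_exp s]
    _ = 1 := by rw [← exp_add, neg_add_cancel, exp_zero]

lemma div_one_add_le_one_sub_exp_neg {s : ℝ} (hs : -1 < s) : s / (1 + s) ≤ 1 - exp (-s) := by
  rw [div_le_iff₀ (by linarith)]
  linarith [exp_neg_mul_one_add_le_one s]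

lemma exp_neg_div_one_add_exp_neg_le {t : ℝ} (ht0 : 0 ≤ t) (ht2 : t ≤ 2) :
    exp (-t) / (1 + exp (-t)) ≤ 1 / 2 - t / 8 := by
  have hb := exp_neg_mul_one_add_le_one t
  have hb0 := exp_pos (-t)
  rw [div_le_iff₀ (by positivity)]
  nlinarith [mul_le_mul_of_nonneg_right hb (by linarith : (0 : ℝ) ≤ 4 + t)]

lemma mul_exp_neg_div_le (z : ℝ) {c : ℝ} (hc : 0 < c) : z * exp (-z / c) ≤ c := by
  have h := mul_exp_neg_le_exp_neg_one (z / c)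
  have h1 : exp (-1) ≤ 1 := exp_le_one_iff.mpr (by norm_num)
  calc z * exp (-z / c) = c * (z / c * exp (-(z / c))) := by field_simp
    _ ≤ c * 1 := by gcongr; linarith
    _ = c := mul_one c

lemma exp_neg_div_mul_exp_neg_div_mul_add_le {α β p q c d : ℝ} (hα : 0 ≤ α) (hβ : 0 ≤ β)
    (hp : 0 ≤ p) (hq : 0 ≤ q) (hc : 0 < c) (hd : 0 < d) :
    exp (-p / c) * exp (-q / d) * (α + β * p + q) ≤ α + β * c + d := by
  have hp' := mul_exp_neg_div_le p hc
  have hq' := mul_exp_neg_div_le q hd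
  have hP1 : exp (-p / c) ≤ 1 :=
    exp_le_one_iff.mpr (div_nonpos_of_nonpos_of_nonneg (neg_nonpos.mpr hp) hc.le)
  have hQ1 : exp (-q / d) ≤ 1 :=
    exp_le_one_iff.mpr (div_nonpos_of_nonpos_of_nonneg (neg_nonpos.mpr hq) hd.le)
  have hP0 := exp_pos (-p / c)
  have hQ0 := exp_pos (-q / d)
  have hPQ : exp (-p / c) * exp (-q / d) ≤ 1 := mul_le_one₀ hP1 hQ0.le hQ1
  calc exp (-p / c) * exp (-q / d) * (α + β * p + q)
      = α * (exp (-p / c) * exp (-q / d)) + β * (p * exp (-p / c) * exp (-q / d))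
        + q * exp (-q / d) * exp (-p / c) := by ring
    _ ≤ α * 1 + β * (c * 1) + d * 1 := by gcongr
    _ = α + β * c + d := by ring

noncomputable def mehlerLogDeriv (n : ℕ) (t r2 S : ℝ) : ℝ :=
  exp (-t) * r2 * (1 + exp (-2 * t)) / (1 - exp (-2 * t)) ^ 2
    - n * exp (-2 * t) / (1 - exp (-2 * t)) - exp (-t) * S / (1 + exp (-t)) ^ 2

lemma one_sub_exp_neg_two_mul_pos {t : ℝ} (ht : 0 < t) : 0 < 1 - exp (-2 * t) :=
  sub_pos.mpr (exp_lt_one_iff.mpr (by linarith))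

lemma hasDerivAt_mehler (n : ℕ) (x y : EuclideanSpace ℝ (Fin n)) {t : ℝ} (ht : 0 < t) :
    HasDerivAt (fun s => mehler n s x y)
      (mehler n t x y * mehlerLogDeriv n t (‖x - y‖ ^ 2) (‖x‖ ^ 2 + ‖y‖ ^ 2)) t := by
  have hA := (one_sub_exp_neg_two_mul_pos ht).ne'
  have hB : 1 + exp (-t) ≠ 0 := by positivity
  have hb : HasDerivAt (fun s => exp (-s)) (-exp (-t)) t := by
    simpa using (hasDerivAt_neg t).exp
  have hA' : HasDerivAt (fun s => 1 - exp (-2 * s)) (2 * exp (-2 * t)) t := by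
    simpa [mul_comm] using (((hasDerivAt_id t).const_mul (-2)).exp).const_sub 1
  have h : HasDerivAt (fun s => mehler n s x y) _ t :=
    ((hA'.rpow_const (p := -(n : ℝ) / 2) (Or.inl hA)).mul
      ((hb.mul_const (‖x - y‖ ^ 2)).neg.div hA' hA).exp).mul
      ((hb.mul_const (‖x‖ ^ 2 + ‖y‖ ^ 2)).div (hb.const_add 1) hB).exp
  refine h.congr_deriv ?_
  simp only [mehler, mehlerLogDeriv, Pi.neg_apply, Pi.div_apply, Pi.mul_apply]
  rw [rpow_sub_one hA]
  field_simp
  ring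

lemma two_mul_div_three_le_one_sub_exp_neg_two_mul {t : ℝ} (ht0 : 0 ≤ t) (ht1 : t ≤ 1) :
    2 * t / 3 ≤ 1 - exp (-2 * t) := by
  have h := div_one_add_le_one_sub_exp_neg (s := 2 * t) (by linarith)
  rw [neg_mul]
  refine le_trans ?_ h
  gcongr
  linarith

lemma mul_abs_mehlerLogDeriv_le (n : ℕ) {t r2 S : ℝ} (ht0 : 0 < t) (ht1 : t ≤ 1)
    (hr2 : 0 ≤ r2) (hS : 0 ≤ S) :
    t * |mehlerLogDeriv n t r2 S| ≤ 3 * n / 2 + 9 / 2 * (r2 / t) + t * S := by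
  have hA := two_mul_div_three_le_one_sub_exp_neg_two_mul ht0.le ht1
  have hA0 : 0 < 1 - exp (-2 * t) := one_sub_exp_neg_two_mul_pos ht0
  have ha1 : exp (-2 * t) ≤ 1 := exp_le_one_iff.mpr (by linarith)
  have hb1 : exp (-t) ≤ 1 := exp_le_one_iff.mpr (by linarith)
  have hB1 : 1 ≤ (1 + exp (-t)) ^ 2 := one_le_pow₀ (by linarith [exp_pos (-t)])
  have hT1 : exp (-t) * r2 * (1 + exp (-2 * t)) / (1 - exp (-2 * t)) ^ 2 ≤
      1 * r2 * (1 + 1) / (2 * t / 3) ^ 2 := by gcongr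
  have hT2 : n * exp (-2 * t) / (1 - exp (-2 * t)) ≤ n * 1 / (2 * t / 3) := by gcongr
  have hT3 : exp (-t) * S / (1 + exp (-t)) ^ 2 ≤ S :=
    (div_le_self (by positivity) hB1).trans (mul_le_of_le_one_left hS hb1)
  have hE : |mehlerLogDeriv n t r2 S| ≤ 9 / 2 * r2 / t ^ 2 + 3 * n / (2 * t) + S := by
    have h1 : 0 ≤ exp (-t) * r2 * (1 + exp (-2 * t)) / (1 - exp (-2 * t)) ^ 2 := by
      positivity
    have h2 : 0 ≤ n * exp (-2 * t) / (1 - exp (-2 * t)) := by positivity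
    have h3 : 0 ≤ exp (-t) * S / (1 + exp (-t)) ^ 2 := by positivity
    have e1 : 1 * r2 * (1 + 1) / (2 * t / 3) ^ 2 = 9 / 2 * r2 / t ^ 2 := by field_simp; ring
    have e2 : n * 1 / (2 * t / 3) = 3 * n / (2 * t) := by field_simp
    rw [mehlerLogDeriv, abs_le]
    constructor <;> linarith
  calc t * |mehlerLogDeriv n t r2 S| ≤ t * (9 / 2 * r2 / t ^ 2 + 3 * n / (2 * t) + S) := by
        gcongr
    _ = 3 * n / 2 + 9 / 2 * (r2 / t) + t * S := by field_simp; ring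

lemma mehler_pos (n : ℕ) (x y : EuclideanSpace ℝ (Fin n)) {t : ℝ} (ht : 0 < t) :
    0 < mehler n t x y := by
  have := one_sub_exp_neg_two_mul_pos ht
  unfold mehler
  positivity

lemma one_div_three_le_exp_neg {t : ℝ} (ht : t ≤ 1) : 1 / 3 ≤ exp (-t) :=
  calc 1 / 3 ≤ (exp 1)⁻¹ := by rw [one_div]; exact inv_anti₀ (exp_pos 1) exp_one_lt_three.le
    _ = exp (-1) := (exp_neg 1).symm
    _ ≤ exp (-t) := exp_le_exp.mpr (by linarith)

lemma mehler_le (n : ℕ) (x y : EuclideanSpace ℝ (Fin n)) {t : ℝ} (ht0 : 0 < t)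
    (ht1 : t ≤ 1) :
    mehler n t x y ≤ (2 / 3) ^ (-(n : ℝ) / 2) * t ^ (-(n : ℝ) / 2) *
      exp (-‖x - y‖ ^ 2 / (8 * t)) * exp ((‖x‖ ^ 2 + ‖y‖ ^ 2) / 2) *
      (exp (-(‖x - y‖ ^ 2 / t) / 24) * exp (-(t * (‖x‖ ^ 2 + ‖y‖ ^ 2)) / 8)) := by
  set r2 := ‖x - y‖ ^ 2
  set S := ‖x‖ ^ 2 + ‖y‖ ^ 2
  have hS : 0 ≤ S := by positivity
  have hA := two_mul_div_three_le_one_sub_exp_neg_two_mul ht0.le ht1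
  have hA0 := one_sub_exp_neg_two_mul_pos ht0
  have hPower : (1 - exp (-2 * t)) ^ (-(n : ℝ) / 2) ≤
      (2 / 3) ^ (-(n : ℝ) / 2) * t ^ (-(n : ℝ) / 2) := by
    rw [← mul_rpow (by norm_num) ht0.le]
    refine rpow_le_rpow_of_nonpos (by positivity) (by linarith) ?_
    linarith [n.cast_nonneg (α := ℝ)]
  have hGauss : exp (-(exp (-t) * r2) / (1 - exp (-2 * t))) ≤
      exp (-r2 / (8 * t)) * exp (-(r2 / t) / 24) := by
    have hb := one_div_three_le_exp_neg ht1
    have hA2 : 1 - exp (-2 * t) ≤ 2 * t := by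
      rw [neg_mul]
      linarith [one_sub_le_exp_neg (2 * t)]
    rw [← exp_add, exp_le_exp, neg_div,
      show -r2 / (8 * t) + -(r2 / t) / 24 = -(1 / 3 * r2 / (2 * t)) by ring, neg_le_neg_iff]
    gcongr
  have hGrowth : exp (exp (-t) * S / (1 + exp (-t))) ≤ exp (S / 2) * exp (-(t * S) / 8) := by
    have h := exp_neg_div_one_add_exp_neg_le ht0.le (by linarith)
    rw [← exp_add, exp_le_exp, mul_div_right_comm]
    nlinarith [mul_le_mul_of_nonneg_right h hS]
  calc mehler n t x y
      ≤ ((2 / 3) ^ (-(n : ℝ) / 2) * t ^ (-(n : ℝ) / 2)) *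
          (exp (-r2 / (8 * t)) * exp (-(r2 / t) / 24)) * (exp (S / 2) * exp (-(t * S) / 8)) := by
        unfold mehler
        gcongr
    _ = _ := by ring

theorem stmt_6 (n : ℕ) : ∃ C : ℝ, 0 < C ∧
    ∀ (x y : EuclideanSpace ℝ (Fin n)) (t : ℝ), t ∈ Set.Ioc (0:ℝ) 1 →
      |t * deriv (fun s => mehler n s x y) t| ≤
        C * t ^ (-(n : ℝ) / 2) * Real.exp (-‖x - y‖ ^ 2 / (8 * t)) *
          Real.exp ((‖x‖ ^ 2 + ‖y‖ ^ 2) / 2) := by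
  refine ⟨(2 / 3) ^ (-(n : ℝ) / 2) * (3 * n / 2 + 116), by positivity, ?_⟩
  rintro x y t ⟨ht0, ht1⟩
  rw [(hasDerivAt_mehler n x y ht0).deriv, mul_left_comm, abs_mul,
    abs_of_pos (mehler_pos n x y ht0), abs_mul, abs_of_pos ht0]
  set r2 := ‖x - y‖ ^ 2
  set S := ‖x‖ ^ 2 + ‖y‖ ^ 2
  have hr2 : 0 ≤ r2 := by positivity
  have hS : 0 ≤ S := by positivity
  set K := (2 / 3 : ℝ) ^ (-(n : ℝ) / 2) * t ^ (-(n : ℝ) / 2) * exp (-r2 / (8 * t)) *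
    exp (S / 2)
  set L := 3 * n / 2 + 9 / 2 * (r2 / t) + t * S
  calc mehler n t x y * (t * |mehlerLogDeriv n t r2 S|)
      ≤ K * (exp (-(r2 / t) / 24) * exp (-(t * S) / 8)) * L :=
        mul_le_mul (mehler_le n x y ht0 ht1) (mul_abs_mehlerLogDeriv_le n ht0 ht1 hr2 hS)
          (by positivity) (by positivity)
    _ = K * (exp (-(r2 / t) / 24) * exp (-(t * S) / 8) * L) := by ring
    _ ≤ K * (3 * n / 2 + 9 / 2 * 24 + 8) := by
        gcongr
        exact exp_neg_div_mul_exp_neg_div_mul_add_le (by positivity) (by positivity)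
          (by positivity) (by positivity) (by norm_num) (by norm_num)
    _ = _ := by ring
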